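/- arXiv:math/0605582 — 5 statements merged into one kernel-verified Lean document; each statement's English description precedes it below -/
import Mathlib

section
/- For a connected finite graph G with cycle-space matrix A(x) defined from a basis of cycles c₁,…,c_{m−l+1} with entries A_{i,i}(x) = Σ_{e∈c_i} 1/x_e and A_{i,j}(x) = Σ_{e∈c_i∩c_j} ±1/x_e (sign according to relative orientation), one has det A(x) = Σ_{T spanning tree of G} Π_{e∉E(T)} 1/x_e. In particular det A(x) is independent of the choice of cycle basis arising from a spanning tree. -/
/-!
Write `C` for the integer matrix `(c_f(e))` and `W = diag(1/x_e)`. The cycle matrix is `C W Cᵀ`,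
so by the Cauchy–Binet formula its determinant is `∑_S det(C_S)² ∏_{e ∈ S} 1/x_e`, summed over the
edge sets `S` with `m - l + 1` elements, where `C_S` is the square minor on the columns in `S`.
If the complement of `S` is a spanning tree, expanding every `c_f` in the fundamental cycles of
that tree inverts `C_S` over `ℤ` (a cycle supported on a tree vanishes), so `det(C_S)² = 1`.
Otherwise `det C_S = 0`: either `S` contains a loop, whose column vanishes, or the complement of
`S` has the right size but is disconnected, and then the indicator of one of its components gives
a nonzero vector in the kernel of `C_S`, because every cycle is orthogonal to every coboundary.
-/

open scoped Classical

open Finset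

theorem filter_image_eq_image_comp_perm {m n : Type*} [Fintype m] [DecidableEq m] [Fintype n]
    [DecidableEq n] {φ : m → n} (hφ : Function.Injective φ) :
    univ.filter (fun r : m → n => univ.image r = univ.image φ) =
      univ.image fun σ : Equiv.Perm m => φ ∘ σ := by
  ext r
  simp only [mem_filter, mem_univ, true_and, mem_image]
  constructor
  · intro hr
    have hrinj : Function.Injective r := by
      have hcard : (univ.image r).card = (univ : Finset m).card := by
        rw [hr, card_image_of_injective _ hφ]
      simpa using card_image_iff.1 hcard
    have hmem : ∀ i, ∃ j, φ j = r i := fun i => by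
      have hi : r i ∈ univ.image φ := hr ▸ mem_image_of_mem r (mem_univ i)
      simpa using hi
    choose σ hσ using hmem
    have hσ_inj : Function.Injective σ := fun i j h => hrinj (by rw [← hσ i, ← hσ j, h])
    exact ⟨Equiv.ofBijective σ (Finite.injective_iff_bijective.1 hσ_inj), funext hσ⟩
  · rintro ⟨σ, rfl⟩
    rw [← image_image, image_univ_equiv]

theorem exists_injective_image_univ_eq {m n : Type*} [Fintype m] [DecidableEq n] {S : Finset n}
    (hS : S.card = Fintype.card m) :
    ∃ φ : m → n, Function.Injective φ ∧ univ.image φ = S := by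
  let e : m ≃ S := Fintype.equivOfCardEq (by simp [hS])
  refine ⟨fun i => e i, Subtype.val_injective.comp e.injective, ?_⟩
  ext x
  simp only [mem_image, mem_univ, true_and]
  exact ⟨by rintro ⟨i, rfl⟩; exact (e i).2, fun hx => ⟨e.symm ⟨x, hx⟩, by simp⟩⟩

namespace Matrix

variable {m n R : Type*} [Fintype m] [DecidableEq m] [Fintype n] [DecidableEq n] [CommRing R]

omit [DecidableEq n] in
theorem det_mul_eq_sum_prod_mul_det_submatrix (A : Matrix m n R) (B : Matrix n m R) :
    (A * B).det = ∑ r : m → n, (∏ i, A i (r i)) * (B.submatrix r id).det := by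
  have hrows : A * B = fun i => ∑ k, A i k • B k := by
    ext i j
    simp [mul_apply, Finset.sum_apply]
  rw [hrows]
  refine (detRowAlternating.toMultilinearMap.map_sum fun i k => A i k • B k).trans
    (sum_congr rfl fun r _ => ?_)
  rw [MultilinearMap.map_smul_univ, smul_eq_mul]
  rfl

omit [Fintype n] [DecidableEq n] in
theorem sum_perm_prod_mul_det_submatrix_comp (A : Matrix m n R) (B : Matrix n m R) (φ : m → n) :
    ∑ σ : Equiv.Perm m, (∏ i, A i (φ (σ i))) * (B.submatrix (φ ∘ σ) id).det =
      (A.submatrix id φ).det * (B.submatrix φ id).det := by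
  have hperm : ∀ σ : Equiv.Perm m, (B.submatrix (φ ∘ σ) id).det =
      Equiv.Perm.sign σ * (B.submatrix φ id).det := fun σ => det_permute σ (B.submatrix φ id)
  calc ∑ σ : Equiv.Perm m, (∏ i, A i (φ (σ i))) * (B.submatrix (φ ∘ σ) id).det
      = ∑ σ : Equiv.Perm m, (Equiv.Perm.sign σ * ∏ i, (A.submatrix id φ)ᵀ (σ i) i) *
          (B.submatrix φ id).det := sum_congr rfl fun σ _ => by
            rw [hperm]
            simp only [transpose_apply, submatrix_apply, id]
            ring
    _ = _ := by rw [← sum_mul, ← det_apply', det_transpose]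

theorem det_mul_eq_sum_powersetCard (A : Matrix m n R) (B : Matrix n m R) (g : Finset n → R)
    (hg : ∀ φ : m → n, Function.Injective φ →
      (A.submatrix id φ).det * (B.submatrix φ id).det = g (univ.image φ)) :
    (A * B).det = ∑ S ∈ powersetCard (Fintype.card m) univ, g S := by
  have hfiber : ∀ S : Finset n,
      ∑ r with univ.image r = S, (∏ i, A i (r i)) * (B.submatrix r id).det =
        if S.card = Fintype.card m then g S else 0 := by
    intro S
    split_ifs with hS
    · obtain ⟨φ, hφ, rfl⟩ := exists_injective_image_univ_eq hS
      have hcomp : Set.InjOn (fun σ : Equiv.Perm m => φ ∘ σ) ↑(univ : Finset (Equiv.Perm m)) :=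
        fun σ _ τ _ h => Equiv.ext fun i => hφ (congrFun h i)
      rw [filter_image_eq_image_comp_perm hφ, sum_image hcomp]
      exact (sum_perm_prod_mul_det_submatrix_comp A B φ).trans (hg φ hφ)
    · refine sum_eq_zero fun r hr => ?_
      have hr : ¬ Function.Injective r := fun hinj => hS <| by
        rw [← (mem_filter.1 hr).2, card_image_of_injective _ hinj, card_univ]
      obtain ⟨i, j, hij, hne⟩ := Function.not_injective_iff.1 hr
      rw [det_zero_of_row_eq hne (by ext; simp [hij]), mul_zero]
  rw [det_mul_eq_sum_prod_mul_det_submatrix,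
    ← sum_fiberwise_of_maps_to (t := univ) (g := fun r : m → n => univ.image r)
      (fun r _ => mem_univ _),
    sum_congr rfl fun S _ => hfiber S, ← sum_filter, powersetCard_eq_filter, powerset_univ]

theorem det_mul_diagonal_mul_transpose_eq_sum (C : Matrix m n R) (w : n → R) (g : Finset n → R)
    (hg : ∀ φ : m → n, Function.Injective φ → (C.submatrix id φ).det ^ 2 = g (univ.image φ)) :
    (C * diagonal w * Cᵀ).det = ∑ S ∈ powersetCard (Fintype.card m) univ, g S * ∏ e ∈ S, w e := by
  refine det_mul_eq_sum_powersetCard _ _ _ fun φ hφ => ?_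
  have hleft : (C * diagonal w).submatrix id φ = of fun i j => w (φ j) * C.submatrix id φ i j := by
    ext i j
    simp [mul_diagonal, mul_comm]
  rw [hleft, det_mul_row, ← transpose_submatrix, det_transpose, prod_image fun i _ j _ h => hφ h,
    ← hg φ hφ]
  ring

end Matrix

namespace Multigraph

variable {V E : Type*} (src tgt : E → V)

def spanGraph (S : Finset E) : SimpleGraph V :=
  SimpleGraph.fromEdgeSet {s | ∃ e ∈ S, src e ≠ tgt e ∧ s = s(src e, tgt e)}

variable [DecidableEq V]

def nonloops (S : Finset E) : Finset E := S.filter fun e => src e ≠ tgt e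

def IsSpanningTree [Fintype V] (S : Finset E) : Prop :=
  (∀ e, src e = tgt e → e ∈ S) ∧ (nonloops src tgt S).card = Fintype.card V - 1 ∧
    (spanGraph src tgt S).Connected

variable {R : Type*} [CommRing R]

def incidence (e : E) : V → R := Pi.single (tgt e) 1 - Pi.single (src e) 1

theorem single_sub_single_mem_span {S : Finset E} {u v : V}
    (h : (spanGraph src tgt S).Reachable u v) :
    (Pi.single v 1 - Pi.single u 1 : V → R) ∈
      Submodule.span R (incidence src tgt '' ↑(nonloops src tgt S)) := by
  obtain ⟨p⟩ := h
  induction p with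
  | nil => simp
  | @cons a b v hab p ih =>
    obtain ⟨⟨e, he, hne, hs⟩, -⟩ := (SimpleGraph.fromEdgeSet_adj _).1 hab
    have hinc : (incidence src tgt e : V → R) ∈
        Submodule.span R (incidence src tgt '' ↑(nonloops src tgt S)) :=
      Submodule.subset_span ⟨e, by simp [nonloops, he, hne], rfl⟩
    have hstep : (Pi.single b 1 - Pi.single a 1 : V → R) ∈
        Submodule.span R (incidence src tgt '' ↑(nonloops src tgt S)) := by
      rcases Sym2.eq_iff.1 hs with ⟨rfl, rfl⟩ | ⟨rfl, rfl⟩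
      · exact hinc
      · simpa [incidence] using neg_mem hinc
    convert add_mem ih hstep using 1
    abel

theorem card_le_finrank_span_add_one {K : Type*} [Field K] [Fintype V] {S : Finset E}
    (hS : (spanGraph src tgt S).Connected) :
    Fintype.card V ≤ Module.finrank K
      (Submodule.span K ((incidence src tgt : E → V → K) '' ↑(nonloops src tgt S))) + 1 := by
  obtain ⟨v₀⟩ := hS.nonempty
  set W := Submodule.span K ((incidence src tgt : E → V → K) '' ↑(nonloops src tgt S))
  have htop : W ⊔ K ∙ (Pi.single v₀ 1 : V → K) = ⊤ := by
    rw [eq_top_iff, ← (Pi.basisFun K V).span_eq, Submodule.span_le]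
    rintro _ ⟨v, rfl⟩
    have hv := Submodule.add_mem_sup (single_sub_single_mem_span src tgt (hS.preconnected v₀ v))
      (Submodule.mem_span_singleton_self (Pi.single v₀ (1 : K)))
    simpa using hv
  calc Fintype.card V = Module.finrank K ↥(W ⊔ K ∙ (Pi.single v₀ 1 : V → K)) := by
        rw [htop, finrank_top, Module.finrank_fintype_fun_eq_card]
    _ ≤ _ := Submodule.finrank_add_le_finrank_add_finrank _ _
    _ ≤ _ := by
      gcongr
      simpa using finrank_span_le_card ({Pi.single v₀ 1} : Set (V → K))

theorem linearIndependent_incidence {K : Type*} [Field K] [Fintype V] {S : Finset E}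
    (hconn : (spanGraph src tgt S).Connected)
    (hcard : (nonloops src tgt S).card = Fintype.card V - 1) :
    LinearIndependent K fun e : nonloops src tgt S => (incidence src tgt (e : E) : V → K) := by
  have hrange : Set.range (fun e : nonloops src tgt S => (incidence src tgt (e : E) : V → K)) =
      (incidence src tgt : E → V → K) '' ↑(nonloops src tgt S) := by
    ext; simp
  rw [linearIndependent_iff_card_eq_finrank_span]
  refine le_antisymm ?_ (finrank_range_le_card _)
  rw [Set.finrank, hrange, Fintype.card_coe, hcard]
  have := card_le_finrank_span_add_one (K := K) src tgt hconn
  omega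

variable [Fintype E]

def boundary : (E → R) →ₗ[R] V → R := Fintype.linearCombination R (incidence src tgt)

theorem boundary_apply (z : E → R) (v : V) :
    boundary src tgt z v =
      ∑ e, z e * ((if tgt e = v then 1 else 0) - (if src e = v then 1 else 0)) := by
  simp [boundary, Fintype.linearCombination_apply, Finset.sum_apply, incidence, Pi.single_apply,
    eq_comm]

theorem boundary_intCast_eq_zero_iff [CharZero R] (z : E → ℤ) :
    boundary src tgt (fun e => (z e : R)) = 0 ↔ boundary src tgt z = 0 := by
  simp only [funext_iff, boundary_apply, Pi.zero_apply]
  norm_cast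

theorem card_nonloops_eq_iff [DecidableEq E] {S T : Finset E} (hS : ∀ e, src e = tgt e → e ∈ S)
    (hT : ∀ e, src e = tgt e → e ∈ T) :
    (nonloops src tgt S).card = (nonloops src tgt T).card ↔ Sᶜ.card = Tᶜ.card := by
  have hsplit : ∀ S : Finset E, (∀ e, src e = tgt e → e ∈ S) →
      S.card = (nonloops src tgt S).card + (univ.filter fun e => src e = tgt e).card := by
    intro S hS
    rw [nonloops, ← card_filter_add_card_filter_not (fun e => src e ≠ tgt e) (s := S)]
    congr 2
    ext e
    simpa using hS e
  have hS' := hsplit S hS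
  have hT' := hsplit T hT
  have hSle := card_le_univ S
  have hTle := card_le_univ T
  rw [card_compl, card_compl]
  omega

theorem exists_cut_of_not_connected {K : Type*} [Field K] {S : Finset E}
    (hG : (spanGraph src tgt univ).Connected)
    (hS : ¬ (spanGraph src tgt S).Connected) :
    ∃ χ : V → K, (∀ e ∈ S, χ (tgt e) = χ (src e)) ∧ ∃ e, χ (tgt e) ≠ χ (src e) := by
  obtain ⟨u, v, huv⟩ : ∃ u v, ¬ (spanGraph src tgt S).Reachable u v := by
    by_contra! h
    exact hS ((SimpleGraph.connected_iff _).2 ⟨h, hG.nonempty⟩)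
  let χ : V → K := fun w => if (spanGraph src tgt S).Reachable u w then 1 else 0
  refine ⟨χ, fun e he => ?_, ?_⟩
  · by_cases hne : src e = tgt e
    · rw [hne]
    · have hadj : (spanGraph src tgt S).Adj (src e) (tgt e) :=
        (SimpleGraph.fromEdgeSet_adj _).2 ⟨⟨e, he, hne, rfl⟩, hne⟩
      have hiff : (spanGraph src tgt S).Reachable u (tgt e) ↔
          (spanGraph src tgt S).Reachable u (src e) :=
        ⟨fun h => h.trans hadj.symm.reachable, fun h => h.trans hadj.reachable⟩
      simp only [χ, hiff]
  · obtain ⟨d, -, hd₁, hd₂⟩ := (hG.preconnected u v).some.exists_boundary_dart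
      {w | (spanGraph src tgt S).Reachable u w} (SimpleGraph.Reachable.refl u) huv
    obtain ⟨⟨e, -, -, hs⟩, -⟩ := (SimpleGraph.fromEdgeSet_adj _).1 d.adj
    refine ⟨e, ?_⟩
    rcases Sym2.eq_iff.1 hs with ⟨h₁, h₂⟩ | ⟨h₁, h₂⟩ <;>
      simp_all [χ]

theorem exists_fundamentalCycle [DecidableEq E] {S : Finset E} {e₀ : E} (he₀ : e₀ ∉ S)
    (h : (spanGraph src tgt S).Reachable (src e₀) (tgt e₀)) :
    ∃ z : E → R, boundary src tgt z = 0 ∧ z e₀ = 1 ∧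
      ∀ e, z e ≠ 0 → e = e₀ ∨ e ∈ nonloops src tgt S := by
  obtain ⟨l, hl, hlz⟩ := (Finsupp.mem_span_image_iff_linearCombination R).1
    (single_sub_single_mem_span (R := R) src tgt h)
  have hl0 : ∀ e, e ∉ nonloops src tgt S → l e = 0 := fun e he =>
    Finsupp.notMem_support_iff.1 fun h => he (hl h)
  have hbl : boundary src tgt ⇑l = incidence src tgt e₀ := by
    rw [incidence, ← hlz, boundary, ← Finsupp.linearCombination_eq_fintype_linearCombination_apply,
      Finsupp.linearEquivFunOnFinite_symm_coe]
  refine ⟨Pi.single e₀ 1 - ⇑l, ?_, ?_, fun e he => ?_⟩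
  · rw [map_sub, hbl, boundary, Fintype.linearCombination_apply_single, one_smul, sub_self]
  · simp [hl0 e₀ fun h => he₀ (mem_filter.1 h).1]
  · by_cases h : e = e₀
    · exact Or.inl h
    · refine Or.inr (by_contra fun hS => he ?_)
      simp [h, hl0 e hS]

variable [Fintype V]

theorem sum_mul_sub_eq_sum_mul_boundary (z : E → R) (χ : V → R) :
    ∑ e, z e * (χ (tgt e) - χ (src e)) = ∑ v, χ v * boundary src tgt z v := by
  simp only [boundary_apply, Finset.mul_sum]
  rw [Finset.sum_comm]
  refine sum_congr rfl fun e _ => ?_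
  simp [mul_sub, Finset.sum_sub_distrib, mul_comm]

theorem eq_zero_of_boundary_eq_zero {K : Type*} [Field K] {S : Finset E}
    (hconn : (spanGraph src tgt S).Connected)
    (hcard : (nonloops src tgt S).card = Fintype.card V - 1) {z : E → K}
    (hz : boundary src tgt z = 0) (hsupp : ∀ e, z e ≠ 0 → e ∈ nonloops src tgt S) : z = 0 := by
  have hsum : ∑ e : nonloops src tgt S, z e • (incidence src tgt (e : E) : V → K) = 0 := by
    rw [sum_coe_sort (nonloops src tgt S) fun e => z e • (incidence src tgt e : V → K),
      sum_subset (subset_univ _) fun e _ he => by rw [not_imp_comm.1 (hsupp e) he, zero_smul],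
      ← hz, boundary, Fintype.linearCombination_apply]
  have hli := Fintype.linearIndependent_iff.1
    (linearIndependent_incidence (K := K) src tgt hconn hcard) (fun e => z e) hsum
  funext e
  by_contra he
  exact he (hli ⟨e, hsupp e he⟩)

variable [DecidableEq E]

theorem det_eq_zero_of_not_connected {K : Type*} [Field K] {ι : Type*} [Fintype ι] [DecidableEq ι]
    (hG : (spanGraph src tgt univ).Connected) (c : ι → E → K)
    (hc : ∀ i, boundary src tgt (c i) = 0) {φ : ι → E} (hφ : Function.Injective φ)
    (hS : ¬ (spanGraph src tgt (univ.image φ)ᶜ).Connected) :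
    (Matrix.of fun i j => c i (φ j)).det = 0 := by
  obtain ⟨χ, hflat, e₁, he₁⟩ := exists_cut_of_not_connected (K := K) src tgt hG hS
  obtain ⟨j₁, rfl⟩ : ∃ j, φ j = e₁ := by
    by_contra! h
    exact he₁ (hflat e₁ (by simpa using h))
  rw [← Matrix.exists_mulVec_eq_zero_iff]
  refine ⟨fun j => χ (tgt (φ j)) - χ (src (φ j)), fun h => he₁ (sub_eq_zero.1 (congrFun h j₁)),
    funext fun i => ?_⟩
  calc ∑ j, c i (φ j) * (χ (tgt (φ j)) - χ (src (φ j)))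
      = ∑ e ∈ univ.image φ, c i e * (χ (tgt e) - χ (src e)) := by
        rw [sum_image fun _ _ _ _ h => hφ h]
    _ = ∑ e, c i e * (χ (tgt e) - χ (src e)) :=
        sum_subset (subset_univ _) fun e _ he => by
          rw [hflat e (mem_compl.2 he), sub_self, mul_zero]
    _ = ∑ v, χ v * boundary src tgt (c i) v := sum_mul_sub_eq_sum_mul_boundary src tgt _ _
    _ = 0 := by simp [hc i]

theorem eq_sum_smul_of_boundary_eq_zero {K : Type*} [Field K] {ι : Type*} [Fintype ι]
    [DecidableEq ι] {φ : ι → E}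
    (hconn : (spanGraph src tgt (univ.image φ)ᶜ).Connected)
    (hcard : (nonloops src tgt (univ.image φ)ᶜ).card = Fintype.card V - 1)
    (b : ι → E → K) (hb : ∀ j, boundary src tgt (b j) = 0)
    (hbφ : ∀ j k, b j (φ k) = if j = k then 1 else 0)
    (hbloop : ∀ j e, src e = tgt e → b j e = 0) {z : E → K} (hz : boundary src tgt z = 0)
    (hzloop : ∀ e, src e = tgt e → z e = 0) :
    z = ∑ j, z (φ j) • b j := by
  rw [← sub_eq_zero]
  refine eq_zero_of_boundary_eq_zero src tgt hconn hcard (by simp [hz, hb]) fun e he => ?_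
  have hne : src e ≠ tgt e := fun hl => he (by simp [hzloop e hl, hbloop _ e hl])
  refine mem_filter.2 ⟨mem_compl.2 fun he' => he ?_, hne⟩
  obtain ⟨k, -, rfl⟩ := mem_image.1 he'
  simp [Finset.sum_apply, hbφ]

theorem isUnit_det_of_isSpanningTree {ι : Type*} [Fintype ι] [DecidableEq ι] (c : ι → E → ℤ)
    (hc : ∀ i, boundary src tgt (c i) = 0) (hloop : ∀ i e, src e = tgt e → c i e = 0)
    {ψ : ι → E} (hψ : ∀ i j, c i (ψ j) = if i = j then 1 else 0) {φ : ι → E}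
    (hφ : Function.Injective φ) (hS : IsSpanningTree src tgt (univ.image φ)ᶜ) :
    IsUnit (Matrix.of fun i j => c i (φ j)).det := by
  obtain ⟨hSloop, hScard, hSconn⟩ := hS
  have hφS : ∀ j, φ j ∉ (univ.image φ)ᶜ := fun j => by simp
  choose b hb hb₁ hbsupp using fun j =>
    exists_fundamentalCycle (R := ℤ) src tgt (hφS j) (hSconn.preconnected _ _)
  have hbφ : ∀ j k, b j (φ k) = if j = k then 1 else 0 := by
    intro j k
    split_ifs with h
    · exact h ▸ hb₁ j
    · by_contra hne
      rcases hbsupp j _ hne with h' | h'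
      · exact h (hφ h').symm
      · exact hφS k (mem_filter.1 h').1
  have hbloop : ∀ j e, src e = tgt e → b j e = 0 := fun j e hl => by
    by_contra hne
    rcases hbsupp j e hne with rfl | h'
    · exact hφS j (hSloop _ hl)
    · exact (mem_filter.1 h').2 hl
  have hexpand : ∀ i, (fun e => (c i e : ℚ)) = ∑ j, (c i (φ j) : ℚ) • fun e => (b j e : ℚ) :=
    fun i => eq_sum_smul_of_boundary_eq_zero src tgt hSconn hScard _
      (fun j => (boundary_intCast_eq_zero_iff src tgt (b j)).2 (hb j))
      (fun j k => by simp [hbφ]) (fun j e hl => by simp [hbloop j e hl])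
      ((boundary_intCast_eq_zero_iff src tgt (c i)).2 (hc i)) (fun e hl => by simp [hloop i e hl])
  refine Matrix.isUnit_det_of_right_inverse (B := Matrix.of fun j k => b j (ψ k)) ?_
  ext i k
  have hik := congrFun (hexpand i) (ψ k)
  simp only [Finset.sum_apply, Pi.smul_apply, smul_eq_mul, hψ] at hik
  simp only [Matrix.mul_apply, Matrix.of_apply, Matrix.one_apply]
  exact_mod_cast hik.symm

theorem det_sq_eq_ite_isSpanningTree {ι : Type*} [Fintype ι] [DecidableEq ι] {T : Finset E}
    (hT : IsSpanningTree src tgt T) (hι : Fintype.card ι = Tᶜ.card) (c : ι → E → ℤ)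
    (hc : ∀ i, boundary src tgt (c i) = 0) (hloop : ∀ i e, src e = tgt e → c i e = 0)
    {ψ : ι → E} (hψ : ∀ i j, c i (ψ j) = if i = j then 1 else 0) {φ : ι → E}
    (hφ : Function.Injective φ) :
    (Matrix.of fun i j => (c i (φ j) : ℝ)).det ^ 2 =
      if IsSpanningTree src tgt (univ.image φ)ᶜ then 1 else 0 := by
  split_ifs with hS
  · have hcast : (Matrix.of fun i j => (c i (φ j) : ℝ)).det =
        ((Matrix.of fun i j => c i (φ j)).det : ℝ) :=
      (RingHom.map_det (Int.castRingHom ℝ) _).symm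
    rw [hcast]
    exact_mod_cast Int.isUnit_sq (isUnit_det_of_isSpanningTree src tgt c hc hloop hψ hφ hS)
  rw [sq_eq_zero_iff]
  by_cases hφloop : ∃ j, src (φ j) = tgt (φ j)
  · obtain ⟨j, hj⟩ := hφloop
    exact Matrix.det_eq_zero_of_column_eq_zero j fun i => by simp [hloop i _ hj]
  push Not at hφloop
  have hSloop : ∀ e, src e = tgt e → e ∈ (univ.image φ)ᶜ := fun e hl => mem_compl.2 fun he => by
    obtain ⟨j, -, rfl⟩ := mem_image.1 he
    exact hφloop j hl
  have hScard : (nonloops src tgt (univ.image φ)ᶜ).card = Fintype.card V - 1 := by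
    rw [← hT.2.1, card_nonloops_eq_iff src tgt hSloop hT.1, compl_compl,
      card_image_of_injective _ hφ, card_univ, hι]
  have hG : (spanGraph src tgt univ).Connected :=
    hT.2.2.mono <| SimpleGraph.fromEdgeSet_mono <| by
      rintro _ ⟨e, -, hne, hs⟩
      exact ⟨e, mem_univ e, hne, hs⟩
  exact det_eq_zero_of_not_connected src tgt hG (fun i e => (c i e : ℝ))
    (fun i => (boundary_intCast_eq_zero_iff src tgt (c i)).2 (hc i)) hφ
    fun hconn => hS ⟨hSloop, hScard, hconn⟩

theorem sum_powersetCard_eq_sum_isSpanningTree {M : Type*} [CommSemiring M] {T : Finset E}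
    (hT : IsSpanningTree src tgt T) (w : E → M) :
    ∑ S ∈ powersetCard Tᶜ.card univ,
        (if IsSpanningTree src tgt Sᶜ then 1 else 0) * ∏ e ∈ S, w e =
      ∑ T' ∈ univ.powerset.filter (IsSpanningTree src tgt), ∏ e ∈ univ \ T', w e := by
  simp only [ite_mul, one_mul, zero_mul]
  rw [← sum_filter]
  refine sum_nbij' compl compl (fun S hS => ?_) (fun T' hT' => ?_) (fun S _ => compl_compl S)
    (fun S _ => compl_compl S) fun S _ => by rw [← compl_eq_univ_sdiff, compl_compl]
  · simp only [mem_filter, mem_powersetCard] at hS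
    simpa using hS.2
  · simp only [mem_filter, mem_powerset] at hT'
    simp only [mem_filter, mem_powersetCard, compl_compl]
    exact ⟨⟨subset_univ _,
      (card_nonloops_eq_iff src tgt hT'.2.1 hT.1).1 (hT'.2.2.1.trans hT.2.1.symm)⟩, hT'.2⟩

end Multigraph

theorem cycle_matrix_det_general {V E : Type*} [Fintype V] [Fintype E] [DecidableEq V]
    [DecidableEq E] (src tgt : E → V) (x : E → ℝ)
    (T : Finset E)
    (hloops : ∀ e, src e = tgt e → e ∈ T)
    (hcard : (T.filter (fun e => src e ≠ tgt e)).card = Fintype.card V - 1)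
    (hconn : (SimpleGraph.fromEdgeSet
      {s | ∃ e ∈ T, src e ≠ tgt e ∧ s = s(src e, tgt e)}).Connected)
    (c : {e : E // e ∉ T ∧ src e ≠ tgt e} → E → ℤ)
    (hdiag : ∀ f, c f f.val = 1)
    (hsupp : ∀ f e, c f e ≠ 0 → e ∈ T ∨ e = f.val)
    (hnoloop : ∀ f e, src e = tgt e → c f e = 0)
    (hcycle : ∀ f v, ∑ e, (c f e : ℝ) *
      ((if tgt e = v then 1 else 0) - (if src e = v then 1 else 0)) = 0) :
    Matrix.det (Matrix.of fun f g : {e : E // e ∉ T ∧ src e ≠ tgt e} =>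
        ∑ e, (c f e : ℝ) * (c g e : ℝ) * (x e)⁻¹) =
      ∑ T' ∈ Finset.univ.powerset.filter (fun T' : Finset E =>
          (∀ e, src e = tgt e → e ∈ T') ∧
          (T'.filter (fun e => src e ≠ tgt e)).card = Fintype.card V - 1 ∧
          (SimpleGraph.fromEdgeSet
            {s | ∃ e ∈ T', src e ≠ tgt e ∧ s = s(src e, tgt e)}).Connected),
        ∏ e ∈ Finset.univ \ T', (x e)⁻¹ := by
  have hT : Multigraph.IsSpanningTree src tgt T := ⟨hloops, hcard, hconn⟩
  have hcardK : Fintype.card {e : E // e ∉ T ∧ src e ≠ tgt e} = Tᶜ.card := by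
    rw [Fintype.card_subtype]
    congr 1
    ext e
    simpa using fun heT hl => heT (hloops e hl)
  have hc : ∀ f, Multigraph.boundary src tgt (c f) = 0 := fun f =>
    (Multigraph.boundary_intCast_eq_zero_iff (R := ℝ) src tgt (c f)).1
      (funext fun v => (Multigraph.boundary_apply src tgt _ v).trans (hcycle f v))
  have hval : ∀ f g : {e : E // e ∉ T ∧ src e ≠ tgt e}, c f g = if f = g then 1 else 0 := by
    intro f g
    split_ifs with h
    · exact h ▸ hdiag f
    · by_contra hne
      rcases hsupp f g hne with h' | h'
      · exact g.2.1 h'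
      · exact h (Subtype.ext h').symm
  have hmat : Matrix.of (fun f g : {e : E // e ∉ T ∧ src e ≠ tgt e} =>
        ∑ e, (c f e : ℝ) * (c g e : ℝ) * (x e)⁻¹) =
      Matrix.of (fun f e => (c f e : ℝ)) * Matrix.diagonal (fun e => (x e)⁻¹) *
        (Matrix.of fun f e => (c f e : ℝ)).transpose := by
    ext f g
    simp [Matrix.mul_apply, Matrix.diagonal_apply, mul_right_comm]
  rw [hmat, Matrix.det_mul_diagonal_mul_transpose_eq_sum _ _
    (fun S => if Multigraph.IsSpanningTree src tgt Sᶜ then 1 else 0)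
    fun _ hφ => Multigraph.det_sq_eq_ite_isSpanningTree src tgt hT hcardK c hc hnoloop hval hφ,
    hcardK]
  convert Multigraph.sum_powersetCard_eq_sum_isSpanningTree src tgt hT _ using 3
  exact Iff.rfl

/-- Proposition 2.6: for a connected finite graph `G` (edges given by an
abstract edge type `E` with endpoint maps `src, tgt`; loops are edges with `src e = tgt e`)
with a spanning tree `T` (containing all loops, whose non-loop part is a tree spanning `V`)
and the fundamental cycles `c f` obtained by adding the non-tree non-loop edge `f` to `T`
(represented as integer edge vectors: supported on `T ∪ {f}`, with `c f f = 1`, vanishing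
on loops and with zero boundary), the cycle-overlap matrix
`A(x)_{f,g} = Σ_e c_f(e) c_g(e) / x_e` (whose diagonal entries are `Σ_{e ∈ c_f} 1/x_e` and
off-diagonal entries carry the relative-orientation signs) satisfies
`det A(x) = Σ_{T' spanning tree} Π_{e ∉ T'} 1/x_e`.
In particular `det A(x)` is independent of the chosen spanning tree and cycle basis. -/
theorem cycle_matrix_det {V E : Type*} [Fintype V] [Fintype E] [DecidableEq V]
    [DecidableEq E] (src tgt : E → V) (x : E → ℝ) (hx : ∀ e, 0 < x e)
    (T : Finset E)
    (hloops : ∀ e, src e = tgt e → e ∈ T)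
    (hcard : (T.filter (fun e => src e ≠ tgt e)).card = Fintype.card V - 1)
    (hconn : (SimpleGraph.fromEdgeSet
      {s | ∃ e ∈ T, src e ≠ tgt e ∧ s = s(src e, tgt e)}).Connected)
    (c : {e : E // e ∉ T ∧ src e ≠ tgt e} → E → ℤ)
    (hdiag : ∀ f, c f f.val = 1)
    (hsupp : ∀ f e, c f e ≠ 0 → e ∈ T ∨ e = f.val)
    (hnoloop : ∀ f e, src e = tgt e → c f e = 0)
    (hcycle : ∀ f v, ∑ e, (c f e : ℝ) *
      ((if tgt e = v then 1 else 0) - (if src e = v then 1 else 0)) = 0) :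
    Matrix.det (Matrix.of fun f g : {e : E // e ∉ T ∧ src e ≠ tgt e} =>
        ∑ e, (c f e : ℝ) * (c g e : ℝ) * (x e)⁻¹) =
      ∑ T' ∈ Finset.univ.powerset.filter (fun T' : Finset E =>
          (∀ e, src e = tgt e → e ∈ T') ∧
          (T'.filter (fun e => src e ≠ tgt e)).card = Fintype.card V - 1 ∧
          (SimpleGraph.fromEdgeSet
            {s | ∃ e ∈ T', src e ≠ tgt e ∧ s = s(src e, tgt e)}).Connected),
        ∏ e ∈ Finset.univ \ T', (x e)⁻¹ :=
  cycle_matrix_det_general src tgt x T hloops hcard hconn c hdiag hsupp hnoloop hcycle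
end

section
/- The edge-reinforced random walk is partially exchangeable: if two finite admissible paths π, π' in G have the same starting vertex and the same edge-traversal counts k_e(π) = k_e(π') for every edge e, then P_{v₀,a}(Z_n = π) = P_{v₀,a}(Z_n = π'). -/
open MeasureTheory Finset
open scoped ENNReal

namespace Rev

variable {V : Type*} [Fintype V] [DecidableEq V]

/-- Sum of the weights of all edges incident to a vertex (loops counted once). -/
noncomputable def vertWeight (E : Finset (Sym2 V)) (x : Sym2 V → ℝ) (v : V) : ℝ :=
  ∑ e ∈ E.filter (fun e => v ∈ e), x e

/-- Number of traversals of edge `e` by the path `p` among the first `n` steps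
(counted in both directions), doubled for loops: this is `k_e(p)`. -/
def edgeCount (p : ℕ → V) (n : ℕ) (e : Sym2 V) : ℕ :=
  ((Finset.range n).filter (fun i => s(p i, p (i + 1)) = e)).card *
    (if e.IsDiag then 2 else 1)

/-- Number of departures of the path from vertex `v` among the first `n` steps: `k_v(p)`. -/
def departCount (p : ℕ → V) (n : ℕ) (v : V) : ℕ :=
  ((Finset.range n).filter (fun i => p i = v)).card

/-- The path is admissible: every step uses an edge of the graph. -/
def Admissible (E : Finset (Sym2 V)) (p : ℕ → V) (n : ℕ) : Prop :=
  ∀ i < n, s(p i, p (i + 1)) ∈ E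

/-- Probability `Q_{p 0, x}(Z_n = p)` that the reversible Markov chain with edge
weights `x` follows the path `p` for `n` steps. -/
noncomputable def pathProb (E : Finset (Sym2 V)) (x : Sym2 V → ℝ) (p : ℕ → V) (n : ℕ) : ℝ :=
  ∏ i ∈ Finset.range n, x s(p i, p (i + 1)) / vertWeight E x (p i)

/-- Membership in the simplex Δ of normalized positive edge weights. -/
def MemSimplex (E : Finset (Sym2 V)) (x : Sym2 V → ℝ) : Prop :=
  (∀ e ∈ E, 0 < x e) ∧ (∀ e ∉ E, x e = 0) ∧ ∑ e ∈ E, x e = 1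

/-- Probability `P_{p 0, a}(Z_n = p)` that the edge-reinforced random walk with initial
weights `a` follows the path `p` for `n` steps: at each step an incident edge is traversed
with probability proportional to its current weight; the weight of an edge increases by 1
per traversal, by 2 for loops (so the increment equals `edgeCount p i e`). -/
noncomputable def errwProb (E : Finset (Sym2 V)) (a : Sym2 V → ℝ) (p : ℕ → V) (n : ℕ) : ℝ :=
  ∏ i ∈ Finset.range n,
    (a s(p i, p (i + 1)) + edgeCount p i s(p i, p (i + 1))) /
      (∑ e ∈ E.filter (fun e => p i ∈ e), (a e + edgeCount p i e))

open scoped Classical in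
/-- `T` is a spanning tree of `(V, E)`: a subgraph containing all loops whose non-loop
part is a spanning tree in the usual sense. -/
def IsSpanningTree (E T : Finset (Sym2 V)) : Prop :=
  T ⊆ E ∧ (∀ e ∈ E, e.IsDiag → e ∈ T) ∧
  (T.filter (fun e => ¬ e.IsDiag)).card = Fintype.card V - 1 ∧
  (SimpleGraph.fromEdgeSet (↑(T.filter (fun e => ¬ e.IsDiag)) : Set (Sym2 V))).Connected

open scoped Classical in
/-- `det A(x)` of the cycle matrix, via the matrix-tree identity (Proposition 2.6):
the sum over spanning trees of the product of reciprocal weights of omitted edges. -/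
noncomputable def treeSum (E : Finset (Sym2 V)) (x : Sym2 V → ℝ) : ℝ :=
  ∑ T ∈ E.powerset.filter (fun T => IsSpanningTree E T), ∏ e ∈ E \ T, (x e)⁻¹

/-- The normalizing constant `Z_{v₀,a}` of display (14); here
`l = |V| + |E_loop|` and `m = |E|`. -/
noncomputable def Znorm (E : Finset (Sym2 V)) (v₀ : V) (a : Sym2 V → ℝ) : ℝ :=
  (∏ e ∈ E, Real.Gamma (a e)) /
    (Real.Gamma (vertWeight E a v₀ / 2) *
      (∏ v ∈ Finset.univ.erase v₀, Real.Gamma ((vertWeight E a v + 1) / 2)) *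
      (∏ e ∈ E.filter (fun e => e.IsDiag), Real.Gamma ((a e + 1) / 2))) *
  (((E.card - 1).factorial : ℝ) *
     Real.pi ^ ((((Fintype.card V + (E.filter (fun e => e.IsDiag)).card : ℕ) : ℝ) - 1) / 2) /
     2 ^ ((1 : ℝ) - ((Fintype.card V + (E.filter (fun e => e.IsDiag)).card : ℕ) : ℝ) +
        ∑ e ∈ E, a e))

/-- The conjugate prior density `φ_{v₀,a}` of Definition 2.5 (with `det A(x)` expressed
through the spanning-tree sum of Proposition 2.6). -/
noncomputable def phi (E : Finset (Sym2 V)) (v₀ : V) (a : Sym2 V → ℝ) (x : Sym2 V → ℝ) : ℝ :=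
  (Znorm E v₀ a)⁻¹ *
    ((∏ e ∈ E.filter (fun e => ¬ e.IsDiag), x e ^ (a e - 1 / 2)) *
      (∏ e ∈ E.filter (fun e => e.IsDiag), x e ^ (a e / 2 - 1))) /
    (vertWeight E x v₀ ^ (vertWeight E a v₀ / 2) *
      ∏ v ∈ Finset.univ.erase v₀, vertWeight E x v ^ ((vertWeight E a v + 1) / 2)) *
  Real.sqrt (treeSum E x)

/-- Parametrization of the simplex Δ by the coordinates other than a fixed edge `e₀`. -/
noncomputable def fill (E : Finset (Sym2 V)) (e₀ : ↥E) (y : {e : ↥E // e ≠ e₀} → ℝ) :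
    Sym2 V → ℝ :=
  fun s => if h : s ∈ E then
    (if h2 : (⟨s, h⟩ : ↥E) = e₀ then 1 - ∑ i, y i else y ⟨⟨s, h⟩, h2⟩) else 0

/-- The normalized Lebesgue measure σ on the simplex Δ (total mass one). -/
noncomputable def simplexMeasure (E : Finset (Sym2 V)) (e₀ : ↥E) : Measure (Sym2 V → ℝ) :=
  ((E.card - 1).factorial : ℝ≥0∞) •
    Measure.map (fill E e₀)
      (volume.restrict {y : {e : ↥E // e ≠ e₀} → ℝ | (∀ i, 0 < y i) ∧ (∑ i, y i) < 1})

/-- The prior/posterior measure `ℙ_{v₀,a} = φ_{v₀,a} dσ` on the simplex. -/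
noncomputable def priorMeasure (E : Finset (Sym2 V)) (e₀ : ↥E) (v₀ : V) (a : Sym2 V → ℝ) :
    Measure (Sym2 V → ℝ) :=
  (simplexMeasure E e₀).withDensity (fun x => ENNReal.ofReal (phi E v₀ a x))


section Aux

open scoped Classical

/-- Reindexing: a product over the times at which `P` holds of a function of the running
count of previous such times equals a product over an initial segment. -/
private lemma prod_filter_count (n : ℕ) (P : ℕ → Prop) [DecidablePred P] (g : ℕ → ℝ) :
    ∏ i ∈ (Finset.range n).filter P, g (((Finset.range i).filter P).card)
      = ∏ j ∈ Finset.range (((Finset.range n).filter P).card), g j := by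
  set S := (Finset.range n).filter P with hS
  have hmono : ∀ i ∈ S, ∀ i' ∈ S, i < i' →
      ((Finset.range i).filter P).card < ((Finset.range i').filter P).card := by
    intro i hi i' hi' hlt
    apply Finset.card_lt_card
    constructor
    · exact Finset.filter_subset_filter _ (Finset.range_subset_range.2 hlt.le)
    · intro hsub
      have h1 : i ∈ (Finset.range i').filter P := by
        simp only [Finset.mem_filter, Finset.mem_range]
        exact ⟨hlt, (Finset.mem_filter.1 hi).2⟩
      have h2 := hsub h1
      simp [Finset.mem_filter, Finset.mem_range] at h2
  have hinj : ∀ i ∈ S, ∀ i' ∈ S,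
      ((Finset.range i).filter P).card = ((Finset.range i').filter P).card → i = i' := by
    intro i hi i' hi' h
    rcases lt_trichotomy i i' with h1 | h1 | h1
    · exact absurd h (Nat.ne_of_lt (hmono _ hi _ hi' h1))
    · exact h1
    · exact absurd h.symm (Nat.ne_of_lt (hmono _ hi' _ hi h1))
  have hlt : ∀ i ∈ S, ((Finset.range i).filter P).card < S.card := by
    intro i hi
    apply Finset.card_lt_card
    constructor
    · rw [hS]
      exact Finset.filter_subset_filter _
        (Finset.range_subset_range.2 (Finset.mem_range.1 (Finset.mem_filter.1 hi).1).le)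
    · intro hsub
      have h2 := hsub hi
      simp [Finset.mem_filter, Finset.mem_range] at h2
  have himg : S.image (fun i => ((Finset.range i).filter P).card) = Finset.range S.card := by
    apply Finset.eq_of_subset_of_card_le
    · intro j hj
      simp only [Finset.mem_image] at hj
      obtain ⟨i, hi, rfl⟩ := hj
      exact Finset.mem_range.2 (hlt i hi)
    · rw [Finset.card_range, Finset.card_image_of_injOn]
      intro i hi i' hi' h
      exact hinj i hi i' hi' h
  rw [← himg]
  exact (Finset.prod_image hinj).symm

private lemma card_filter_shift (Q : ℕ → Prop) [DecidablePred Q] (n : ℕ) :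
    ((Finset.range n).filter (fun j => Q (j + 1))).card + (if Q 0 then 1 else 0)
      = ((Finset.range (n + 1)).filter Q).card := by
  simp only [Finset.card_filter]
  rw [Finset.sum_range_succ']

private lemma sum_edgeCount_incident (E : Finset (Sym2 V)) (p : ℕ → V) (n : ℕ)
    (hp : Admissible E p n) (i : ℕ) (hi : i ≤ n) (v : V) :
    ∑ e ∈ E.filter (fun e => v ∈ e), edgeCount p i e
      = departCount p i v + ((Finset.range i).filter (fun j => p (j + 1) = v)).card := by
  have h1 : ∀ e ∈ E.filter (fun e => v ∈ e), edgeCount p i e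
      = ∑ j ∈ Finset.range i,
          (if s(p j, p (j + 1)) = e then (if e.IsDiag then 2 else 1) else 0) := by
    intro e _
    rw [edgeCount, ← Finset.sum_filter, Finset.sum_const, smul_eq_mul]
  rw [Finset.sum_congr rfl h1, Finset.sum_comm]
  have h2 : ∀ j ∈ Finset.range i,
      (∑ e ∈ E.filter (fun e => v ∈ e),
        (if s(p j, p (j + 1)) = e then (if e.IsDiag then 2 else 1) else 0))
      = (if p j = v then 1 else 0) + (if p (j + 1) = v then 1 else 0) := by
    intro j hj
    have hje : s(p j, p (j + 1)) ∈ E := hp j (lt_of_lt_of_le (Finset.mem_range.1 hj) hi)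
    rw [Finset.sum_ite_eq (E.filter (fun e => v ∈ e)) (s(p j, p (j + 1)))]
    have hm : (s(p j, p (j + 1)) ∈ E.filter (fun e => v ∈ e)) ↔ (p j = v ∨ p (j + 1) = v) := by
      simp [Finset.mem_filter, hje, Sym2.mem_iff, eq_comm]
    by_cases h3 : p j = v <;> by_cases h4 : p (j + 1) = v
    · have hd : Sym2.IsDiag s(p j, p (j + 1)) := by
        rw [Sym2.isDiag_iff_proj_eq]; exact h3.trans h4.symm
      rw [if_pos (hm.2 (Or.inl h3)), if_pos hd, if_pos h3, if_pos h4]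
    · have hd : ¬ Sym2.IsDiag s(p j, p (j + 1)) := by
        rw [Sym2.isDiag_iff_proj_eq]; exact fun h => h4 (h.symm.trans h3)
      rw [if_pos (hm.2 (Or.inl h3)), if_neg hd, if_pos h3, if_neg h4]
    · have hd : ¬ Sym2.IsDiag s(p j, p (j + 1)) := by
        rw [Sym2.isDiag_iff_proj_eq]; exact fun h => h3 (h.trans h4)
      rw [if_pos (hm.2 (Or.inr h4)), if_neg hd, if_neg h3, if_pos h4]
    · rw [if_neg (fun h => by rcases hm.1 h with h | h; exacts [h3 h, h4 h]),
        if_neg h3, if_neg h4]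
      rfl
  rw [Finset.sum_congr rfl h2, Finset.sum_add_distrib]
  congr 1
  · rw [departCount, Finset.card_filter]
  · rw [Finset.card_filter]

/-- The denominator at step `i` depends only on `p i`, the running departure count,
and whether `p i` is the start vertex. -/
private lemma denom_term (E : Finset (Sym2 V)) (a : Sym2 V → ℝ) (p : ℕ → V) (n : ℕ)
    (hp : Admissible E p n) (i : ℕ) (hi : i < n) :
    (∑ e ∈ E.filter (fun e => p i ∈ e), (a e + (edgeCount p i e : ℝ)))
      = vertWeight E a (p i) + 2 * (departCount p i (p i) : ℝ)
          + (if p 0 = p i then 0 else 1) := by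
  rw [Finset.sum_add_distrib]
  have hsum := sum_edgeCount_incident E p n hp i hi.le (p i)
  have hA : ((Finset.range i).filter (fun j => p (j + 1) = p i)).card
        + (if p 0 = p i then 1 else 0)
      = departCount p i (p i) + 1 := by
    rw [card_filter_shift (fun j => p j = p i) i]
    rw [departCount, Finset.range_add_one, Finset.filter_insert, if_pos rfl,
      Finset.card_insert_of_notMem (by simp)]
  have hcast : (∑ e ∈ E.filter (fun e => p i ∈ e), ((edgeCount p i e : ℝ)))
      = ((∑ e ∈ E.filter (fun e => p i ∈ e), edgeCount p i e : ℕ) : ℝ) := by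
    push_cast; rfl
  rw [hcast, hsum]
  rw [vertWeight]
  split_ifs at hA ⊢ with h
  · have : ((Finset.range i).filter (fun j => p (j + 1) = p i)).card
        = departCount p i (p i) := by omega
    rw [this]; push_cast; ring
  · have : ((Finset.range i).filter (fun j => p (j + 1) = p i)).card
        = departCount p i (p i) + 1 := by omega
    rw [this]; push_cast; ring

private lemma errw_numerator (E : Finset (Sym2 V)) (a : Sym2 V → ℝ) (p : ℕ → V) (n : ℕ)
    (hp : Admissible E p n) :
    ∏ i ∈ Finset.range n,
        (a s(p i, p (i + 1)) + (edgeCount p i s(p i, p (i + 1)) : ℝ))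
      = ∏ e ∈ E, ∏ j ∈ Finset.range (edgeCount p n e / (if e.IsDiag then 2 else 1)),
          (a e + (j : ℝ) * (if e.IsDiag then (2 : ℝ) else 1)) := by
  rw [← Finset.prod_fiberwise_of_maps_to (g := fun i => s(p i, p (i + 1)))
        (fun i hi => hp i (Finset.mem_range.1 hi))]
  refine Finset.prod_congr rfl (fun e _ => ?_)
  have hw : edgeCount p n e / (if e.IsDiag then 2 else 1)
      = ((Finset.range n).filter (fun i => s(p i, p (i + 1)) = e)).card := by
    rw [edgeCount]; split <;> omega
  rw [hw, ← prod_filter_count n (fun i => s(p i, p (i + 1)) = e)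
        (fun j => a e + (j : ℝ) * (if e.IsDiag then (2 : ℝ) else 1))]
  refine Finset.prod_congr rfl (fun i hi => ?_)
  have he : s(p i, p (i + 1)) = e := (Finset.mem_filter.1 hi).2
  rw [he, edgeCount]
  by_cases hd : e.IsDiag <;> simp [hd] <;> push_cast <;> ring

private lemma errw_denominator (E : Finset (Sym2 V)) (a : Sym2 V → ℝ) (p : ℕ → V) (n : ℕ)
    (hp : Admissible E p n) :
    ∏ i ∈ Finset.range n,
        (∑ e ∈ E.filter (fun e => p i ∈ e), (a e + (edgeCount p i e : ℝ)))
      = ∏ v : V, ∏ c ∈ Finset.range (departCount p n v),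
          (vertWeight E a v + 2 * (c : ℝ) + (if p 0 = v then 0 else 1)) := by
  rw [← Finset.prod_fiberwise_of_maps_to (g := p) (t := Finset.univ)
        (fun i _ => Finset.mem_univ (p i))]
  refine Finset.prod_congr rfl (fun v _ => ?_)
  rw [show departCount p n v = ((Finset.range n).filter (fun i => p i = v)).card from rfl,
    ← prod_filter_count n (fun i => p i = v)
        (fun c => vertWeight E a v + 2 * (c : ℝ) + (if p 0 = v then 0 else 1))]
  refine Finset.prod_congr rfl (fun i hi => ?_)
  obtain ⟨hi', hv⟩ := Finset.mem_filter.1 hi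
  subst hv
  rw [denom_term E a p n hp i (Finset.mem_range.1 hi')]
  rfl

private lemma depart_eq (E : Finset (Sym2 V)) (p p' : ℕ → V) (n : ℕ)
    (hp : Admissible E p n) (hp' : Admissible E p' n)
    (hstart : p 0 = p' 0)
    (hcount : ∀ e, edgeCount p n e = edgeCount p' n e) (v : V) :
    departCount p n v = departCount p' n v := by
  have key : ∀ q : ℕ → V, Admissible E q n →
      ∑ e ∈ E.filter (fun e => v ∈ e), edgeCount q n e + (if q 0 = v then 1 else 0)
        = 2 * departCount q n v + (if q n = v then 1 else 0) := by
    intro q hq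
    rw [sum_edgeCount_incident E q n hq n le_rfl v]
    have hA : ((Finset.range n).filter (fun j => q (j + 1) = v)).card
          + (if q 0 = v then 1 else 0)
        = departCount q n v + (if q n = v then 1 else 0) := by
      rw [card_filter_shift (fun j => q j = v) n, departCount, Finset.range_add_one,
        Finset.filter_insert]
      split_ifs with h
      · rw [Finset.card_insert_of_notMem (by simp)]
      · rfl
    omega
  have k1 := key p hp
  have k2 := key p' hp'
  have hs : (∑ e ∈ E.filter (fun e => v ∈ e), edgeCount p n e)
      = ∑ e ∈ E.filter (fun e => v ∈ e), edgeCount p' n e :=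
    Finset.sum_congr rfl (fun e _ => hcount e)
  rw [hs, hstart] at k1
  split_ifs at k1 k2 <;> omega

end Aux

/-- The edge-reinforced random walk is partially exchangeable: two finite
admissible paths with the same starting vertex and the same edge-traversal counts
`k_e(p) = k_e(p')` for every edge have the same probability under `P_{v₀,a}`. -/
theorem errw_partially_exchangeable (E : Finset (Sym2 V)) (a : Sym2 V → ℝ)
    (ha : ∀ e ∈ E, 0 < a e) (p p' : ℕ → V) (n : ℕ)
    (hp : Admissible E p n) (hp' : Admissible E p' n)
    (hstart : p 0 = p' 0)
    (hcount : ∀ e, edgeCount p n e = edgeCount p' n e) :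
    errwProb E a p n = errwProb E a p' n := by
  classical
  unfold errwProb
  simp only [div_eq_mul_inv]
  rw [Finset.prod_mul_distrib, Finset.prod_mul_distrib, Finset.prod_inv_distrib,
    Finset.prod_inv_distrib,
    errw_numerator E a p n hp, errw_numerator E a p' n hp',
    errw_denominator E a p n hp, errw_denominator E a p' n hp']
  congr 1
  · exact Finset.prod_congr rfl fun e _ => by rw [hcount e]
  · refine congrArg _ (Finset.prod_congr rfl fun v _ => ?_)
    rw [depart_eq E p p' n hp hp' hstart hcount v, hstart]

end Rev
end

section
/- Closure under sampling: if the prior on edge weights is ℙ_{v₀,a} = φ_{v₀,a} dσ and one observes a path X₀ = v₀, X₁ = v₁, …, X_n = v_n from the mixture of reversible Markov chains, then the posterior is ℙ_{v_n, (a_e + k_e(Z_n))_{e∈E}}, where k_e(Z_n) is the number of traversals of edge e (doubled for loops); in particular the family {ℙ_{v₀,a}} is a conjugate family. -/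
open MeasureTheory Finset
open scoped ENNReal

open Real

/-! Observing the path multiplies `φ_{v₀,a}` by `∏ᵢ x(Xᵢ, Xᵢ₊₁) / x_{Xᵢ}`. Grouping the
numerator by edges raises the exponent of each `x_e` by the (undoubled) number of traversals
of `e`, which is exactly the shift `a_e ↦ a_e + k_e` in the edge exponents (`k_e / 2` for
loops). Grouping the denominator by vertices raises the exponent of `x_v` by the number of
departures from `v`; by the handshake identity
`∑_{e ∋ v} k_e + 1[X₀ = v] = 2 · #departures from v + 1[Xₙ = v]` this is the shift
`a_v ↦ a_v + ∑_{e ∋ v} k_e` together with the move of the distinguished vertex from `X₀` to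
`Xₙ`. So the posterior density is `φ_{Xₙ, a + k}` up to the ratio of normalizing constants. -/

namespace Rev

section

variable {V : Type*} [DecidableEq V]

def traverseCount (p : ℕ → V) (n : ℕ) (e : Sym2 V) : ℕ :=
  #{i ∈ range n | s(p i, p (i + 1)) = e}

lemma edgeCount_eq_traverseCount_mul (p : ℕ → V) (n : ℕ) (e : Sym2 V) :
    edgeCount p n e = traverseCount p n e * (if e.IsDiag then 2 else 1) := rfl

lemma prod_range_step_eq_prod_pow_traverseCount {M : Type*} [CommMonoid M]
    {E : Finset (Sym2 V)} {p : ℕ → V} {n : ℕ} (hp : Admissible E p n) (f : Sym2 V → M) :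
    ∏ i ∈ range n, f s(p i, p (i + 1)) = ∏ e ∈ E, f e ^ traverseCount p n e := by
  rw [← prod_fiberwise_of_maps_to' (fun i hi => hp i (mem_range.mp hi)) f]
  simp only [prod_const, traverseCount]

lemma ite_mem_mk_isDiag (u w v : V) :
    (if v ∈ s(u, w) then (if s(u, w).IsDiag then 2 else 1) else 0 : ℕ) =
      (if v = u then 1 else 0) + (if v = w then 1 else 0) := by
  by_cases hu : v = u <;> by_cases hw : v = w <;> simp [hu, hw, Sym2.mem_iff] <;> grind

lemma sum_incident_edgeCount_add {E : Finset (Sym2 V)} {p : ℕ → V} {n : ℕ}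
    (hp : Admissible E p n) (v : V) :
    ∑ e ∈ E with v ∈ e, edgeCount p n e + (if v = p 0 then 1 else 0) =
      2 * departCount p n v + (if v = p n then 1 else 0) := by
  have hsteps : ∑ e ∈ E with v ∈ e, edgeCount p n e =
      ∑ i ∈ range n, ((if v = p i then 1 else 0) + (if v = p (i + 1) then 1 else 0)) := by
    simp only [edgeCount_eq_traverseCount_mul, traverseCount, card_filter, sum_mul, ite_mul,
      one_mul, zero_mul]
    rw [sum_comm]
    refine sum_congr rfl fun i hi => ?_
    simp only [sum_ite_eq, mem_filter, hp i (mem_range.mp hi), true_and]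
    exact ite_mem_mk_isDiag _ _ v
  have hdepart : departCount p n v = ∑ i ∈ range n, (if v = p i then 1 else 0) := by
    simp only [departCount, card_filter, eq_comm]
  have hshift := (sum_range_succ' (fun i => if v = p i then 1 else 0) n).symm.trans
    (sum_range_succ _ n)
  rw [hsteps, sum_add_distrib, hdepart]
  omega

noncomputable def edgeFactor (E : Finset (Sym2 V)) (a x : Sym2 V → ℝ) : ℝ :=
  (∏ e ∈ E with ¬ e.IsDiag, x e ^ (a e - 1 / 2)) * ∏ e ∈ E with e.IsDiag, x e ^ (a e / 2 - 1)

lemma edgeFactor_add_edgeCount {E : Finset (Sym2 V)} {x : Sym2 V → ℝ} (hx : ∀ e ∈ E, x e ≠ 0)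
    (a : Sym2 V → ℝ) {p : ℕ → V} {n : ℕ} (hp : Admissible E p n) :
    edgeFactor E (fun e => a e + edgeCount p n e) x =
      edgeFactor E a x * ∏ i ∈ range n, x s(p i, p (i + 1)) := by
  rw [edgeFactor, edgeFactor, prod_range_step_eq_prod_pow_traverseCount hp,
    ← prod_filter_not_mul_prod_filter E (·.IsDiag), mul_mul_mul_comm, ← prod_mul_distrib,
    ← prod_mul_distrib]
  congr 1 <;> refine prod_congr rfl fun e he => ?_ <;>
    rw [← rpow_add_natCast (hx e (mem_filter.mp he).1), edgeCount_eq_traverseCount_mul]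
  · rw [if_neg (mem_filter.mp he).2]
    push_cast
    ring_nf
  · rw [if_pos (mem_filter.mp he).2]
    push_cast
    ring_nf

lemma vertWeight_pos {E : Finset (Sym2 V)} {x : Sym2 V → ℝ} (hx : ∀ e ∈ E, 0 < x e)
    {v : V} {e : Sym2 V} (he : e ∈ E) (hv : v ∈ e) : 0 < vertWeight E x v :=
  sum_pos (fun f hf => hx f (mem_filter.mp hf).1) ⟨e, mem_filter.mpr ⟨he, hv⟩⟩

end

variable {V : Type*} [Fintype V] [DecidableEq V]

lemma prod_range_eq_prod_pow_departCount {M : Type*} [CommMonoid M] (p : ℕ → V) (n : ℕ)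
    (f : V → M) :
    ∏ i ∈ range n, f (p i) = ∏ v, f v ^ departCount p n v := by
  rw [← prod_fiberwise_of_maps_to' (fun i _ => mem_univ (p i)) f]
  simp only [prod_const, departCount]

/-- The vertex part `x_{v₀}^{a_{v₀}/2} ∏_{v ≠ v₀} x_v^{(a_v+1)/2}` of `φ_{v₀,a}`, as one product. -/
noncomputable def vertexFactor (E : Finset (Sym2 V)) (v₀ : V) (a x : Sym2 V → ℝ) : ℝ :=
  ∏ v, vertWeight E x v ^ ((vertWeight E a v + if v = v₀ then 0 else 1) / 2)

lemma phi_eq (E : Finset (Sym2 V)) (v₀ : V) (a x : Sym2 V → ℝ) :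
    phi E v₀ a x =
      (Znorm E v₀ a)⁻¹ * edgeFactor E a x / vertexFactor E v₀ a x * √(treeSum E x) := by
  rw [phi, edgeFactor, vertexFactor, ← mul_prod_erase univ _ (mem_univ v₀), if_pos rfl, add_zero]
  congr 3
  exact prod_congr rfl fun v hv => by rw [if_neg (mem_erase.mp hv).1]

lemma vertexFactor_add_edgeCount {E : Finset (Sym2 V)} {x : Sym2 V → ℝ}
    (hx : ∀ e ∈ E, 0 ≤ x e) {a : Sym2 V → ℝ} (ha : ∀ e ∈ E, 0 ≤ a e) {p : ℕ → V} {n : ℕ}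
    (hp : Admissible E p n) :
    vertexFactor E (p n) (fun e => a e + edgeCount p n e) x =
      vertexFactor E (p 0) a x * ∏ i ∈ range n, vertWeight E x (p i) := by
  rw [vertexFactor, vertexFactor, prod_range_eq_prod_pow_departCount, ← prod_mul_distrib]
  refine prod_congr rfl fun v _ => ?_
  have hexp : (vertWeight E (fun e => a e + edgeCount p n e) v + if v = p n then 0 else 1) / 2
      = (vertWeight E a v + if v = p 0 then 0 else 1) / 2 + departCount p n v := by
    have hcount := congrArg (Nat.cast (R := ℝ)) (sum_incident_edgeCount_add hp v)
    simp only [vertWeight, sum_add_distrib]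
    push_cast at hcount
    split_ifs at hcount ⊢ <;> linarith
  rw [hexp]
  rcases Nat.eq_zero_or_pos (departCount p n v) with h0 | hpos
  · simp [h0]
  · refine rpow_add_natCast' (sum_nonneg fun e he => hx e (mem_filter.mp he).1) (ne_of_gt ?_)
    have : 0 ≤ vertWeight E a v := sum_nonneg fun e he => ha e (mem_filter.mp he).1
    positivity

lemma phi_mul_pathProb {E : Finset (Sym2 V)} {x : Sym2 V → ℝ} (hx : ∀ e ∈ E, 0 < x e)
    {a : Sym2 V → ℝ} (ha : ∀ e ∈ E, 0 ≤ a e) {p : ℕ → V} {n : ℕ} (hp : Admissible E p n)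
    (hZ : Znorm E (p n) (fun e => a e + edgeCount p n e) ≠ 0) :
    phi E (p 0) a x * pathProb E x p n =
      Znorm E (p n) (fun e => a e + edgeCount p n e) / Znorm E (p 0) a *
        phi E (p n) (fun e => a e + edgeCount p n e) x := by
  rw [phi_eq, phi_eq, pathProb, prod_div_distrib,
    edgeFactor_add_edgeCount (fun e he => (hx e he).ne') a hp,
    vertexFactor_add_edgeCount (fun e he => (hx e he).le) ha hp]
  field_simp

lemma Znorm_pos {E : Finset (Sym2 V)} {a : Sym2 V → ℝ} (ha : ∀ e ∈ E, 0 < a e) {v₀ : V}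
    (hv₀ : 0 < vertWeight E a v₀) : 0 < Znorm E v₀ a := by
  have hvert : ∀ v, 0 ≤ vertWeight E a v := fun v =>
    sum_nonneg fun e he => (ha e (mem_filter.mp he).1).le
  unfold Znorm
  refine mul_pos (div_pos ?_ (mul_pos (mul_pos ?_ ?_) ?_)) (div_pos (mul_pos ?_ ?_) ?_)
  · exact prod_pos fun e he => Gamma_pos_of_pos (ha e he)
  · exact Gamma_pos_of_pos (by linarith)
  · exact prod_pos fun v _ => Gamma_pos_of_pos (by linarith [hvert v])
  · exact prod_pos fun e he => Gamma_pos_of_pos (by linarith [ha e (mem_filter.mp he).1])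
  · exact_mod_cast Nat.factorial_pos _
  · exact rpow_pos_of_pos pi_pos _
  · exact rpow_pos_of_pos two_pos _

theorem closure_under_sampling_general (E : Finset (Sym2 V))
    (a : Sym2 V → ℝ) (ha : ∀ e ∈ E, 0 < a e)
    (p : ℕ → V) (n : ℕ) (hp : Admissible E p n) :
    ∃ c : ℝ, 0 < c ∧ ∀ x : Sym2 V → ℝ, MemSimplex E x →
      phi E (p 0) a x * pathProb E x p n =
        c * phi E (p n) (fun e => a e + edgeCount p n e) x := by
  rcases n with _ | m
  · exact ⟨1, one_pos, fun x _ => by simp [pathProb, edgeCount]⟩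
  set b : Sym2 V → ℝ := fun e => a e + edgeCount p (m + 1) e
  have hb : ∀ e ∈ E, 0 < b e := fun e he =>
    add_pos_of_pos_of_nonneg (ha e he) (Nat.cast_nonneg _)
  have hfirst : s(p 0, p 1) ∈ E := hp 0 m.succ_pos
  have hlast : s(p m, p (m + 1)) ∈ E := hp m m.lt_succ_self
  have hZ₀ := Znorm_pos ha (vertWeight_pos ha hfirst (Sym2.mem_mk_left _ _))
  have hZₙ := Znorm_pos hb (vertWeight_pos hb hlast (Sym2.mem_mk_right _ _))
  exact ⟨Znorm E (p (m + 1)) b / Znorm E (p 0) a, div_pos hZₙ hZ₀, fun x hx =>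
    phi_mul_pathProb hx.1 (fun e he => (ha e he).le) hp hZₙ.ne'⟩

/-- Proposition 4.1, closure under sampling: if the prior on normalized edge
weights is `ℙ_{v₀,a} = φ_{v₀,a} dσ` and one observes an admissible path
`X₀ = v₀, …, Xₙ = vₙ` from the mixture of reversible Markov chains, then the posterior is
`ℙ_{vₙ, (a_e + k_e(Z_n))_e}`: the posterior density, which is proportional to
`φ_{v₀,a}(x) · Q_{v₀,x}(Z_n = p)`, equals a positive constant (the normalization) times the
conjugate density `φ_{vₙ, a + k(Z_n)}(x)` on the simplex; in particular the family of
priors `{ℙ_{v₀,a}}` is a conjugate family. -/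
theorem closure_under_sampling (E : Finset (Sym2 V))
    (hconn : (SimpleGraph.fromEdgeSet
      (↑(E.filter (fun e => ¬ e.IsDiag)) : Set (Sym2 V))).Connected)
    (a : Sym2 V → ℝ) (ha : ∀ e ∈ E, 0 < a e)
    (p : ℕ → V) (n : ℕ) (hp : Admissible E p n) :
    ∃ c : ℝ, 0 < c ∧ ∀ x : Sym2 V → ℝ, MemSimplex E x →
      phi E (p 0) a x * pathProb E x p n =
        c * phi E (p n) (fun e => a e + edgeCount p n e) x :=
  closure_under_sampling_general E a ha p n hp

end Rev
end

section
/- Pólya urn / path probability formula for edge-reinforced random walk: for any admissible path π = (v₀, v₁, …, v_n), P_{v₀,a}(Z_n = π) = Π_{i=1}^{n} w_i(π) / s_i(π), where at step i, w_i(π) is the initial weight of edge {v_{i-1}, v_i} plus the reinforcement accumulated by that edge from previous traversals in π, and s_i(π) is the sum over edges incident to v_{i-1} of their reinforced weights; this product depends on π only through v₀ and the counts (k_e(π))_{e∈E}, with explicit value given by the ratio of rising-factorial products [Π_{e∉E_loop} (a_e)(a_e+1)⋯(a_e+k_e−1) · Π_{e∈E_loop} a_e(a_e+2)⋯(a_e+k_e−2)]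 / [a_{v₀}(a_{v₀}+2)⋯(a_{v₀}+2k_{v₀}−2) · Π_{v≠v₀} (a_v+1)(a_v+3)⋯(a_v+2k_v−1)]. -/
open MeasureTheory Finset
open scoped ENNReal

namespace Rev

variable {V : Type*} [Fintype V] [DecidableEq V]

lemma card_filter_range_succ (q : ℕ → Prop) [DecidablePred q] (n : ℕ) :
    ((Finset.range (n + 1)).filter q).card
      = ((Finset.range n).filter q).card + if q n then 1 else 0 := by
  rw [Finset.range_add_one, Finset.filter_insert]
  split
  · rw [Finset.card_insert_of_notMem (by simp)]
  · omega

lemma edgeCount_succ (p : ℕ → V) (n : ℕ) (e : Sym2 V) :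
    edgeCount p (n + 1) e = edgeCount p n e +
      if s(p n, p (n + 1)) = e then (if e.IsDiag then 2 else 1) else 0 := by
  unfold edgeCount
  rw [card_filter_range_succ, add_mul]
  congr 1
  split
  · rw [one_mul]
  · rw [zero_mul]

lemma departCount_succ (p : ℕ → V) (n : ℕ) (v : V) :
    departCount p (n + 1) v = departCount p n v + if p n = v then 1 else 0 := by
  unfold departCount
  rw [card_filter_range_succ]

lemma two_dvd_edgeCount_of_diag (p : ℕ → V) (n : ℕ) {e : Sym2 V} (he : e.IsDiag) :
    2 ∣ edgeCount p n e := by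
  unfold edgeCount
  rw [if_pos he]
  exact dvd_mul_left 2 _

lemma sum_edgeCount (E : Finset (Sym2 V)) (p : ℕ → V) (v : V) :
    ∀ n, Admissible E p n →
      ∑ e ∈ E.filter (fun e => v ∈ e), edgeCount p n e
        = departCount p n v + ((Finset.range n).filter (fun j => p (j + 1) = v)).card
  | 0, _ => by simp [edgeCount, departCount]
  | (n + 1), hp => by
    have hpn : Admissible E p n := fun i hi => hp i (Nat.lt_succ_of_lt hi)
    have hen : s(p n, p (n + 1)) ∈ E := hp n (Nat.lt_succ_self n)
    simp only [edgeCount_succ, Finset.sum_add_distrib, sum_edgeCount E p v n hpn,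
      departCount_succ, card_filter_range_succ, Finset.sum_ite_eq]
    have hw : (if s(p n, p (n + 1)) ∈ E.filter (fun e => v ∈ e)
          then (if (s(p n, p (n + 1))).IsDiag then 2 else 1) else 0)
        = (if p n = v then 1 else 0) + (if p (n + 1) = v then 1 else 0) := by
      rcases eq_or_ne (p n) v with h1 | h1 <;> rcases eq_or_ne (p (n + 1)) v with h2 | h2
      · subst h1
        rw [h2] at hen
        simp [Finset.mem_filter, Sym2.mem_iff, hen, Sym2.mk_isDiag_iff, h2]
      · subst h1
        simp [Finset.mem_filter, Sym2.mem_iff, hen, Sym2.mk_isDiag_iff, Ne.symm h2, h2]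
      · subst h2
        simp [Finset.mem_filter, Sym2.mem_iff, hen, Sym2.mk_isDiag_iff, h1]
      · simp [Finset.mem_filter, Sym2.mem_iff, Ne.symm h1, Ne.symm h2, h1, h2]
    rw [hw]
    omega

lemma arrivals (p : ℕ → V) (v : V) :
    ∀ n, ((Finset.range n).filter (fun j => p (j + 1) = v)).card + (if p 0 = v then 1 else 0)
      = departCount p n v + (if p n = v then 1 else 0)
  | 0 => by simp [departCount]
  | (n + 1) => by
    rw [card_filter_range_succ, departCount_succ]
    have := arrivals p v n
    split_ifs at this ⊢ <;> omega

lemma denom_sum (E : Finset (Sym2 V)) (a : Sym2 V → ℝ) (p : ℕ → V) (n : ℕ)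
    (hp : Admissible E p n) :
    ∑ e ∈ E.filter (fun e => p n ∈ e), (a e + (edgeCount p n e : ℝ))
      = vertWeight E a (p n) + 2 * (departCount p n (p n) : ℝ)
        + (if p n = p 0 then 0 else 1) := by
  rw [Finset.sum_add_distrib]
  have h1 := sum_edgeCount E p (p n) n hp
  have h2 := arrivals p (p n) n
  rw [if_pos rfl] at h2
  unfold vertWeight
  rw [← Nat.cast_sum, h1]
  rcases eq_or_ne (p n) (p 0) with h | h
  · rw [if_pos h]
    rw [if_pos h.symm] at h2
    have hA : ((Finset.range n).filter (fun j => p (j + 1) = p n)).card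
        = departCount p n (p n) := by omega
    rw [hA]
    push_cast
    ring
  · rw [if_neg h]
    rw [if_neg (Ne.symm h)] at h2
    have hA : ((Finset.range n).filter (fun j => p (j + 1) = p n)).card
        = departCount p n (p n) + 1 := by omega
    rw [hA]
    push_cast
    ring

/-- Pólya urn formula for the edge-reinforced random walk: the probability
that the walk follows an admissible path `p` — by definition the product over the steps of
the current (reinforced) weight of the traversed edge divided by the sum of the current
weights of the edges incident to the current vertex — depends on `p` only through the
starting point `p 0` and the counts `(k_e(p))`, and is given explicitly by the ratio of
rising-factorial products
`[Π_{e∉E_loop} a_e(a_e+1)⋯(a_e+k_e−1) · Π_{e∈E_loop} a_e(a_e+2)⋯(a_e+k_e−2)] /`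
`[a_{v₀}(a_{v₀}+2)⋯(a_{v₀}+2k_{v₀}−2) · Π_{v≠v₀} (a_v+1)(a_v+3)⋯(a_v+2k_v−1)]`. -/
theorem errw_path_prob_formula (E : Finset (Sym2 V)) (a : Sym2 V → ℝ)
    (ha : ∀ e ∈ E, 0 < a e) (p : ℕ → V) (n : ℕ) (hp : Admissible E p n) :
    errwProb E a p n =
      ((∏ e ∈ E.filter (fun e => ¬ e.IsDiag),
          ∏ i ∈ Finset.range (edgeCount p n e), (a e + i)) *
        (∏ e ∈ E.filter (fun e => e.IsDiag),
          ∏ i ∈ Finset.range (edgeCount p n e / 2), (a e + 2 * i))) /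
      ((∏ i ∈ Finset.range (departCount p n (p 0)), (vertWeight E a (p 0) + 2 * i)) *
        (∏ v ∈ Finset.univ.erase (p 0),
          ∏ i ∈ Finset.range (departCount p n v), (vertWeight E a v + 1 + 2 * i))) := by
  induction n with
  | zero => simp [errwProb, edgeCount, departCount]
  | succ n ih =>
    have hpn : Admissible E p n := fun i hi => hp i (Nat.lt_succ_of_lt hi)
    have hen : s(p n, p (n + 1)) ∈ E := hp n (Nat.lt_succ_self n)
    have herrw : errwProb E a p (n + 1) = errwProb E a p n *
        ((a s(p n, p (n + 1)) + (edgeCount p n s(p n, p (n + 1)) : ℝ)) /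
          (∑ e ∈ E.filter (fun e => p n ∈ e), (a e + (edgeCount p n e : ℝ)))) := by
      unfold errwProb
      rw [Finset.prod_range_succ]
    rw [herrw, ih hpn, div_mul_div_comm]
    congr 1
    · -- numerator
      by_cases hd : (s(p n, p (n + 1))).IsDiag
      · -- loop step
        have hnd : ∏ e ∈ E.filter (fun e => ¬ e.IsDiag),
              ∏ i ∈ Finset.range (edgeCount p (n + 1) e), (a e + i)
            = ∏ e ∈ E.filter (fun e => ¬ e.IsDiag),
              ∏ i ∈ Finset.range (edgeCount p n e), (a e + i) := by
          refine Finset.prod_congr rfl fun e he => ?_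
          have : edgeCount p (n + 1) e = edgeCount p n e := by
            rw [edgeCount_succ, if_neg, add_zero]
            intro h
            rw [← h] at he
            exact (Finset.mem_filter.1 he).2 hd
          rw [this]
        have hmem : s(p n, p (n + 1)) ∈ E.filter (fun e => e.IsDiag) :=
          Finset.mem_filter.2 ⟨hen, hd⟩
        have herase : ∏ e ∈ (E.filter (fun e => e.IsDiag)).erase s(p n, p (n + 1)),
              ∏ i ∈ Finset.range (edgeCount p (n + 1) e / 2), (a e + 2 * i)
            = ∏ e ∈ (E.filter (fun e => e.IsDiag)).erase s(p n, p (n + 1)),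
              ∏ i ∈ Finset.range (edgeCount p n e / 2), (a e + 2 * i) := by
          refine Finset.prod_congr rfl fun e he => ?_
          rw [edgeCount_succ, if_neg (fun h => (Finset.mem_erase.1 he).1 h.symm), add_zero]
        have hdvd := two_dvd_edgeCount_of_diag p n hd
        have hcnt : edgeCount p (n + 1) s(p n, p (n + 1))
            = edgeCount p n s(p n, p (n + 1)) + 2 := by
          rw [edgeCount_succ, if_pos rfl, if_pos hd]
        have hdiv : edgeCount p (n + 1) s(p n, p (n + 1)) / 2
            = edgeCount p n s(p n, p (n + 1)) / 2 + 1 := by omega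
        have hcast : (2 : ℝ) * ((edgeCount p n s(p n, p (n + 1)) / 2 : ℕ) : ℝ)
            = (edgeCount p n s(p n, p (n + 1)) : ℝ) := by
          have h2 : 2 * (edgeCount p n s(p n, p (n + 1)) / 2)
              = edgeCount p n s(p n, p (n + 1)) := by omega
          exact_mod_cast congrArg (Nat.cast : ℕ → ℝ) h2
        rw [hnd,
          ← Finset.mul_prod_erase _
            (fun e => ∏ i ∈ Finset.range (edgeCount p (n + 1) e / 2), (a e + 2 * i)) hmem,
          ← Finset.mul_prod_erase _
            (fun e => ∏ i ∈ Finset.range (edgeCount p n e / 2), (a e + 2 * i)) hmem,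
          herase, hdiv, Finset.prod_range_succ, hcast]
        ring
      · -- non-loop step
        have hdg : ∏ e ∈ E.filter (fun e => e.IsDiag),
              ∏ i ∈ Finset.range (edgeCount p (n + 1) e / 2), (a e + 2 * i)
            = ∏ e ∈ E.filter (fun e => e.IsDiag),
              ∏ i ∈ Finset.range (edgeCount p n e / 2), (a e + 2 * i) := by
          refine Finset.prod_congr rfl fun e he => ?_
          have : edgeCount p (n + 1) e = edgeCount p n e := by
            rw [edgeCount_succ, if_neg, add_zero]
            intro h
            rw [← h] at he
            exact hd (Finset.mem_filter.1 he).2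
          rw [this]
        have hmem : s(p n, p (n + 1)) ∈ E.filter (fun e => ¬ e.IsDiag) :=
          Finset.mem_filter.2 ⟨hen, hd⟩
        have herase : ∏ e ∈ (E.filter (fun e => ¬ e.IsDiag)).erase s(p n, p (n + 1)),
              ∏ i ∈ Finset.range (edgeCount p (n + 1) e), (a e + i)
            = ∏ e ∈ (E.filter (fun e => ¬ e.IsDiag)).erase s(p n, p (n + 1)),
              ∏ i ∈ Finset.range (edgeCount p n e), (a e + i) := by
          refine Finset.prod_congr rfl fun e he => ?_
          rw [edgeCount_succ, if_neg (fun h => (Finset.mem_erase.1 he).1 h.symm), add_zero]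
        have hcnt : edgeCount p (n + 1) s(p n, p (n + 1))
            = edgeCount p n s(p n, p (n + 1)) + 1 := by
          rw [edgeCount_succ, if_pos rfl, if_neg hd]
        rw [hdg,
          ← Finset.mul_prod_erase _
            (fun e => ∏ i ∈ Finset.range (edgeCount p (n + 1) e), (a e + i)) hmem,
          ← Finset.mul_prod_erase _
            (fun e => ∏ i ∈ Finset.range (edgeCount p n e), (a e + i)) hmem,
          herase, hcnt, Finset.prod_range_succ]
        push_cast
        ring
    · -- denominator
      rw [denom_sum E a p n hpn]
      by_cases h0 : p n = p 0
      · have hQ : ∏ v ∈ Finset.univ.erase (p 0),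
              ∏ i ∈ Finset.range (departCount p (n + 1) v), (vertWeight E a v + 1 + 2 * i)
            = ∏ v ∈ Finset.univ.erase (p 0),
              ∏ i ∈ Finset.range (departCount p n v), (vertWeight E a v + 1 + 2 * i) := by
          refine Finset.prod_congr rfl fun v hv => ?_
          rw [departCount_succ, if_neg, add_zero]
          intro h
          exact (Finset.mem_erase.1 hv).1 (h ▸ h0)
        have hdep : departCount p (n + 1) (p 0) = departCount p n (p 0) + 1 := by
          rw [departCount_succ, if_pos h0]
        rw [if_pos h0, hQ, hdep, Finset.prod_range_succ, h0]
        ring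
      · have hP : departCount p (n + 1) (p 0) = departCount p n (p 0) := by
          rw [departCount_succ, if_neg h0, add_zero]
        have hmem : p n ∈ Finset.univ.erase (p 0) :=
          Finset.mem_erase.2 ⟨h0, Finset.mem_univ _⟩
        have herase : ∏ v ∈ (Finset.univ.erase (p 0)).erase (p n),
              ∏ i ∈ Finset.range (departCount p (n + 1) v), (vertWeight E a v + 1 + 2 * i)
            = ∏ v ∈ (Finset.univ.erase (p 0)).erase (p n),
              ∏ i ∈ Finset.range (departCount p n v), (vertWeight E a v + 1 + 2 * i) := by
          refine Finset.prod_congr rfl fun v hv => ?_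
          rw [departCount_succ, if_neg (fun h => (Finset.mem_erase.1 hv).1 h.symm), add_zero]
        have hdep : departCount p (n + 1) (p n) = departCount p n (p n) + 1 := by
          rw [departCount_succ, if_pos rfl]
        rw [if_neg h0, hP,
          ← Finset.mul_prod_erase _
            (fun v => ∏ i ∈ Finset.range (departCount p (n + 1) v),
              (vertWeight E a v + 1 + 2 * i)) hmem,
          ← Finset.mul_prod_erase _
            (fun v => ∏ i ∈ Finset.range (departCount p n v),
              (vertWeight E a v + 1 + 2 * i)) hmem,
          herase, hdep, Finset.prod_range_succ]
        ring

end Rev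
end

section
/- Replacing a loop by a pendant edge preserves the reinforced walk law: let G' be obtained from G by replacing each loop e at v(e) by a new edge g(e) = {v(e), v'(e)} to a new degree-one vertex, with the same initial weight. Map each admissible path π in G to π' in G' by replacing each loop traversal by a back-and-forth traversal of g(e). Then P_{v₀,a}(Z_n = π) = P'_{v₀,b}(Z_{n'} = π') for the corresponding reinforced walks, where b assigns a_e to g(e) and a_{e'} to remaining edges. -/
/-!
Each edge `e` of `G` has a lift `liftEdge e` in `G'`; lifting is injective, never produces a
loop, and the edges of `G'` at `inl u` are exactly the lifts of the edges of `G` at `u`. Hence,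
as long as the current weights of `G'` agree with those of `G` along `liftEdge`, a non-loop step
has the same probability in both walks and reinforces corresponding edges by `1`. A loop step at
`u` becomes the step `inl u → inr u`, with the same probability, followed by the forced return
`inr u → inl u`, which has probability `1` because the pendant edge, now of positive weight, is
the only edge at `inr u`. The two traversals reinforce the pendant edge by `1 + 1`, matching the
loop's `2`, so the agreement of the weights persists along the whole path.
-/

open Finset

namespace Rev15

variable {V : Type*} [Fintype V] [DecidableEq V]

/-- Edge-reinforced random walk path probability along a list of vertices, with current
edge weights `w`: each step traverses an incident edge with probability proportional to
its current weight; traversed non-loop edges are reinforced by `1`, loops by `2`. -/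
noncomputable def errwList {W : Type*} [Fintype W] [DecidableEq W]
    (E : Finset (Sym2 W)) (w : Sym2 W → ℝ) : List W → ℝ
  | [] => 1
  | [_] => 1
  | u :: v :: rest =>
      (w s(u, v) / ∑ e ∈ E.filter (fun e => u ∈ e), w e) *
        errwList E
          (fun e => if e = s(u, v) then w e + (if e.IsDiag then 2 else 1) else w e)
          (v :: rest)

/-- The image path `π'` in `G'`: every traversal of a loop at `u` (a step `u → u`) is
replaced by a back-and-forth traversal of the pendant edge `{inl u, inr u}`. -/
def liftPath : List V → List (V ⊕ V)
  | [] => []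
  | [v] => [Sum.inl v]
  | u :: v :: rest =>
      if u = v then Sum.inl u :: Sum.inr u :: liftPath (v :: rest)
      else Sum.inl u :: liftPath (v :: rest)

/-- The edge set of `G'`: each loop `{v}` of `G` is replaced by a pendant edge
`{inl v, inr v}` to a new degree-one vertex `inr v`; other edges are kept. -/
def liftEdges (E : Finset (Sym2 V)) : Finset (Sym2 (V ⊕ V)) :=
  (E.filter (fun e => ¬ e.IsDiag)).image (Sym2.map Sum.inl) ∪
    (Finset.univ.filter (fun v : V => s(v, v) ∈ E)).image
      (fun v => s(Sum.inl v, Sum.inr v))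

/-- The initial weights `b` on `G'`: the pendant edge `g(e)` gets the weight of the loop
`e`, all remaining edges keep their weights. -/
noncomputable def liftWeight (a : Sym2 V → ℝ) : Sym2 (V ⊕ V) → ℝ :=
  Sym2.lift ⟨fun u w =>
    match u, w with
    | Sum.inl u, Sum.inl w => a s(u, w)
    | Sum.inl _, Sum.inr w => a s(w, w)
    | Sum.inr u, Sum.inl _ => a s(u, u)
    | Sum.inr _, Sum.inr _ => 0,
    by intro u w; cases u <;> cases w <;> simp [Sym2.eq_swap]⟩

end Rev15

namespace Rev15

def reinforce {W : Type*} [DecidableEq W] (w : Sym2 W → ℝ) (e : Sym2 W) : Sym2 W → ℝ :=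
  fun e' => if e' = e then w e' + (if e'.IsDiag then 2 else 1) else w e'

lemma errwList_cons_cons {W : Type*} [Fintype W] [DecidableEq W] (E : Finset (Sym2 W))
    (w : Sym2 W → ℝ) (u v : W) (rest : List W) :
    errwList E w (u :: v :: rest) =
      w s(u, v) / (∑ e ∈ E.filter (fun e => u ∈ e), w e) *
        errwList E (reinforce w s(u, v)) (v :: rest) :=
  rfl

lemma reinforce_nonneg {W : Type*} [DecidableEq W] {E : Finset (Sym2 W)} {w : Sym2 W → ℝ}
    (hw : ∀ e ∈ E, 0 ≤ w e) (e : Sym2 W) : ∀ e' ∈ E, 0 ≤ reinforce w e e' := by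
  intro e' he'
  unfold reinforce
  have := hw e' he'
  split_ifs <;> linarith

section LiftEdge

variable {V : Type*} [DecidableEq V]

def liftEdge : Sym2 V → Sym2 (V ⊕ V) :=
  Sym2.lift ⟨fun x y => if x = y then s(Sum.inl x, Sum.inr x) else s(Sum.inl x, Sum.inl y),
    fun x y => by
      by_cases h : x = y
      · subst h; rfl
      · simp only [h, Ne.symm h, if_false, Sym2.eq_swap]⟩

@[simp] lemma liftEdge_self (x : V) : liftEdge s(x, x) = s(Sum.inl x, Sum.inr x) := by
  simp [liftEdge]

lemma liftEdge_of_ne {x y : V} (h : x ≠ y) : liftEdge s(x, y) = s(Sum.inl x, Sum.inl y) := by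
  simp [liftEdge, h]

lemma liftEdge_injective : Function.Injective (liftEdge : Sym2 V → Sym2 (V ⊕ V)) := by
  intro e₁ e₂ h
  induction e₁ using Sym2.inductionOn with
  | hf x y =>
    induction e₂ using Sym2.inductionOn with
    | hf x' y' =>
      by_cases h₁ : x = y <;> by_cases h₂ : x' = y' <;>
        simp_all [liftEdge_of_ne]

lemma liftEdge_not_isDiag (e : Sym2 V) : ¬ (liftEdge e).IsDiag := by
  induction e using Sym2.inductionOn with
  | hf x y =>
    by_cases h : x = y
    · subst h; simp
    · simp [liftEdge_of_ne h, h]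

lemma inl_mem_liftEdge (u : V) (e : Sym2 V) : Sum.inl u ∈ liftEdge e ↔ u ∈ e := by
  induction e using Sym2.inductionOn with
  | hf x y =>
    by_cases h : x = y
    · subst h; simp
    · simp [liftEdge_of_ne h]

lemma inr_mem_liftEdge (u : V) (e : Sym2 V) : Sum.inr u ∈ liftEdge e ↔ e = s(u, u) := by
  induction e using Sym2.inductionOn with
  | hf x y =>
    by_cases h : x = y
    · subst h; simp [eq_comm]
    · simp only [liftEdge_of_ne h, Sym2.mem_iff, reduceCtorEq, or_self, false_iff]
      intro hxy
      simp_all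

lemma reinforce_liftEdge (W : Sym2 (V ⊕ V) → ℝ) (e e' : Sym2 V) :
    reinforce W (liftEdge e) (liftEdge e') =
      if e' = e then W (liftEdge e') + 1 else W (liftEdge e') := by
  simp [reinforce, liftEdge_injective.eq_iff, liftEdge_not_isDiag]

variable {E : Finset (Sym2 V)} {w : Sym2 V → ℝ} {W : Sym2 (V ⊕ V) → ℝ}

lemma reinforce_liftEdge_agree_of_ne (hW : ∀ e ∈ E, W (liftEdge e) = w e) {u v : V} (h : u ≠ v) :
    ∀ e ∈ E, reinforce W (liftEdge s(u, v)) (liftEdge e) = reinforce w s(u, v) e := by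
  intro e he
  rw [reinforce_liftEdge, hW e he]
  by_cases he' : e = s(u, v) <;> simp [reinforce, he', h]

/-- Crossing the pendant edge there and back reinforces it twice by `1`, as the loop by `2`. -/
lemma reinforce_liftEdge_agree_self (hW : ∀ e ∈ E, W (liftEdge e) = w e) (u : V) :
    ∀ e ∈ E, reinforce (reinforce W (liftEdge s(u, u))) (liftEdge s(u, u)) (liftEdge e) =
      reinforce w s(u, u) e := by
  intro e he
  rw [reinforce_liftEdge, reinforce_liftEdge, hW e he]
  by_cases he' : e = s(u, u)
  · simp only [he', if_true, reinforce, Sym2.mk_isDiag_iff]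
    ring
  · simp [reinforce, he']

lemma liftWeight_liftEdge (a : Sym2 V → ℝ) (e : Sym2 V) : liftWeight a (liftEdge e) = a e := by
  induction e using Sym2.inductionOn with
  | hf x y =>
    by_cases h : x = y
    · subst h; simp [liftWeight]
    · simp [liftEdge_of_ne h, liftWeight]

lemma exists_liftPath_cons_eq (v : V) (l : List V) : ∃ t, liftPath (v :: l) = Sum.inl v :: t := by
  cases l with
  | nil => exact ⟨[], rfl⟩
  | cons w l =>
    by_cases h : v = w
    · exact ⟨Sum.inr v :: liftPath (w :: l), by simp [liftPath, h]⟩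
    · exact ⟨liftPath (w :: l), by simp [liftPath, h]⟩

end LiftEdge

variable {V : Type*} [Fintype V] [DecidableEq V]

lemma liftEdges_eq_image (E : Finset (Sym2 V)) : liftEdges E = E.image liftEdge := by
  ext e'
  simp only [liftEdges, mem_union, mem_image, mem_filter, Finset.mem_univ, true_and]
  constructor
  · rintro (⟨e, ⟨he, hd⟩, rfl⟩ | ⟨v, hv, rfl⟩)
    · induction e using Sym2.inductionOn with
      | hf x y =>
        have hxy : x ≠ y := by simpa using hd
        exact ⟨s(x, y), he, by simp [liftEdge_of_ne hxy]⟩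
    · exact ⟨s(v, v), hv, liftEdge_self v⟩
  · rintro ⟨e, he, rfl⟩
    induction e using Sym2.inductionOn with
    | hf x y =>
      by_cases h : x = y
      · subst h; exact Or.inr ⟨x, he, (liftEdge_self x).symm⟩
      · exact Or.inl ⟨s(x, y), ⟨he, by simp [h]⟩, by simp [liftEdge_of_ne h]⟩

lemma sum_liftEdges_filter_inl {E : Finset (Sym2 V)} {w : Sym2 V → ℝ}
    {W : Sym2 (V ⊕ V) → ℝ} (hW : ∀ e ∈ E, W (liftEdge e) = w e) (u : V) :
    ∑ e ∈ (liftEdges E).filter (fun e => Sum.inl u ∈ e), W e =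
      ∑ e ∈ E.filter (fun e => u ∈ e), w e := by
  rw [liftEdges_eq_image, filter_image, sum_image fun _ _ _ _ h => liftEdge_injective h]
  simp only [inl_mem_liftEdge]
  exact sum_congr rfl fun e he => hW e (mem_filter.mp he).1

lemma liftEdges_filter_inr {E : Finset (Sym2 V)} {u : V} (hu : s(u, u) ∈ E) :
    (liftEdges E).filter (fun e => Sum.inr u ∈ e) = {s(Sum.inl u, Sum.inr u)} := by
  rw [liftEdges_eq_image, filter_image]
  have : E.filter (fun e => Sum.inr u ∈ liftEdge e) = {s(u, u)} := by
    ext e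
    simp only [mem_filter, inr_mem_liftEdge, mem_singleton]
    exact ⟨And.right, fun h => ⟨h ▸ hu, h⟩⟩
  rw [this, image_singleton, liftEdge_self]

theorem errwList_liftPath (E : Finset (Sym2 V)) (w : Sym2 V → ℝ) (W : Sym2 (V ⊕ V) → ℝ)
    (hw : ∀ e ∈ E, 0 ≤ w e) (hW : ∀ e ∈ E, W (liftEdge e) = w e) :
    ∀ p : List V, p.IsChain (fun u v => s(u, v) ∈ E) →
      errwList E w p = errwList (liftEdges E) W (liftPath p)
  | [], _ => rfl
  | [_], _ => rfl
  | u :: v :: rest, hp => by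
    rw [List.isChain_cons_cons] at hp
    obtain ⟨huv, hrest⟩ := hp
    rw [errwList_cons_cons, ← sum_liftEdges_filter_inl hW]
    by_cases h : u = v
    · subst h
      obtain ⟨t, ht⟩ := exists_liftPath_cons_eq u rest
      rw [liftPath, if_pos rfl, ht, errwList_cons_cons, errwList_cons_cons, ← ht,
        liftEdges_filter_inr huv, sum_singleton, Sym2.eq_swap (a := Sum.inr u), ← liftEdge_self,
        ← errwList_liftPath E _ _ (reinforce_nonneg hw _) (reinforce_liftEdge_agree_self hW u) _ hrest,
        reinforce_liftEdge, if_pos rfl, hW _ huv, div_self (by linarith [hw _ huv]), one_mul]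
    · obtain ⟨t, ht⟩ := exists_liftPath_cons_eq v rest
      rw [liftPath, if_neg h, ht, errwList_cons_cons, ← ht, ← liftEdge_of_ne h, hW _ huv,
        ← errwList_liftPath E _ _ (reinforce_nonneg hw _) (reinforce_liftEdge_agree_of_ne hW h) _ hrest]

/-- replacing each loop by a pendant edge (with the same initial weight)
preserves the law of the edge-reinforced random walk: for every admissible path `p` in
`G`, the probability that the reinforced walk on `G` traverses `p` equals the probability
that the reinforced walk on `G'` traverses the image path `p'`. -/
theorem errw_loop_replacement (E : Finset (Sym2 V)) (a : Sym2 V → ℝ)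
    (ha : ∀ e ∈ E, 0 < a e) (p : List V)
    (hp : List.Chain' (fun u v => s(u, v) ∈ E) p) :
    errwList E a p = errwList (liftEdges E) (liftWeight a) (liftPath p) :=
  errwList_liftPath E a (liftWeight a) (fun e he => (ha e he).le)
    (fun e _ => liftWeight_liftEdge a e) p hp

end Rev15
end
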